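/- arXiv:2507.09415 — 3 statements merged into one kernel-verified Lean document; each statement's English description precedes it below -/
import Mathlib

section
/- Let G:[0,1]²→ℝ be bounded, measurable, and nonnegative, and let Q solve Q(t,u) = 1 + ∫_t^T ∫_0^1 G(v,u) Q(s,v) dv ds. If u₁, u₂ ∈ [0,1] satisfy G(v,u₁) ≤ G(v,u₂) for all v ∈ [0,1], then Q(t,u₁) ≤ Q(t,u₂) for all t ∈ [0,T]. -/
/-!
Everything rests on `Q ≥ 0` on `[0, T] × [0, 1]`: then `G(v, u₁) Q(s, v) ≤ G(v, u₂) Q(s, v)`, and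
integrating the equation compares `Q(t, u₁)` with `Q(t, u₂)`. For the nonnegativity, if
`-Q ≤ b` on `[t, T] × [0, 1]` with `b ≥ 0`, the equation and `0 ≤ G ≤ K` give
`-Q(t, u) ≤ K ∫_t^T b`; starting from a uniform bound `M` and iterating yields
`-Q(t, u) ≤ M (K (T - t))ⁿ / n!` for every `n`, which tends to `0`.
-/

open MeasureTheory intervalIntegral Set Filter
open scoped Nat

lemma intervalIntegrable_mul_of_abs_le {f g : ℝ → ℝ} {A B a b : ℝ} (hf : Measurable f)
    (hg : Measurable g) (hfA : ∀ x, |f x| ≤ A) (hgB : ∀ x, |g x| ≤ B) :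
    IntervalIntegrable (fun x => f x * g x) volume a b :=
  (intervalIntegrable_const (c := A * B)).mono_fun' (hf.mul hg).aestronglyMeasurable <|
    Eventually.of_forall fun x => by
      simpa only [Real.norm_eq_abs, abs_mul] using
        mul_le_mul (hfA x) (hgB x) (abs_nonneg _) ((abs_nonneg _).trans (hfA x))

lemma continuous_intervalIntegral_mul_of_abs_le {g : ℝ → ℝ} {F : ℝ → ℝ → ℝ} {A B a b : ℝ}
    (hg : Measurable g) (hgA : ∀ x, |g x| ≤ A) (hFm : ∀ s, Measurable (F s))
    (hFB : ∀ s x, |F s x| ≤ B) (hFc : ∀ x, Continuous fun s => F s x) :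
    Continuous fun s => ∫ x in a..b, g x * F s x :=
  continuous_of_dominated_interval (bound := fun _ => A * B)
    (fun s => (hg.mul (hFm s)).aestronglyMeasurable)
    (fun s => Eventually.of_forall fun x _ => by
      simpa only [Real.norm_eq_abs, abs_mul] using
        mul_le_mul (hgA x) (hFB s x) (abs_nonneg _) ((abs_nonneg _).trans (hgA x)))
    intervalIntegrable_const
    (Eventually.of_forall fun x _ => continuous_const.mul (hFc x))

lemma mul_integral_pow_div_factorial (K T t : ℝ) (n : ℕ) :
    K * ∫ s in t..T, (K * (T - s)) ^ n / n ! = (K * (T - t)) ^ (n + 1) / (n + 1)! := by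
  simp_rw [mul_pow, mul_div_assoc, intervalIntegral.integral_const_mul,
    intervalIntegral.integral_div, intervalIntegral.integral_comp_sub_left (fun x => x ^ n) T, integral_pow]
  push_cast [Nat.factorial_succ]
  field_simp
  ring

section Volterra

variable {G Q : ℝ → ℝ → ℝ} {T K : ℝ}

lemma neg_le_mul_integral_of_neg_le {t u : ℝ} {b : ℝ → ℝ} (htT : t ≤ T)
    (hG0 : ∀ v ∈ Icc (0:ℝ) 1, 0 ≤ G v u) (hGK : ∀ v, G v u ≤ K)
    (hint : ∀ s, IntervalIntegrable (fun v => G v u * Q s v) volume 0 1)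
    (hIint : IntervalIntegrable (fun s => ∫ v in (0:ℝ)..1, G v u * Q s v) volume t T)
    (heq : Q t u = 1 + ∫ s in t..T, ∫ v in (0:ℝ)..1, G v u * Q s v)
    (hb0 : ∀ s ∈ Icc t T, 0 ≤ b s) (hbi : IntervalIntegrable b volume t T)
    (hQb : ∀ s ∈ Icc t T, ∀ v ∈ Icc (0:ℝ) 1, -Q s v ≤ b s) :
    -Q t u ≤ K * ∫ s in t..T, b s := by
  have hinner : ∀ s ∈ Icc t T, -(K * b s) ≤ ∫ v in (0:ℝ)..1, G v u * Q s v := by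
    intro s hs
    have := integral_mono_on zero_le_one (intervalIntegrable_const (c := -(K * b s))) (hint s)
      fun v hv => by
        linarith [mul_le_mul_of_nonneg_left (hQb s hs v hv) (hG0 v hv),
          mul_le_mul_of_nonneg_right (hGK v) (hb0 s hs)]
    simpa using this
  have houter :=
    integral_mono_on (f := fun s => -(K * b s)) htT (hbi.const_mul K).neg hIint hinner
  rw [intervalIntegral.integral_neg, intervalIntegral.integral_const_mul] at houter
  linarith

lemma neg_le_pow_div_factorial_of_volterra {M : ℝ} (hM : 0 ≤ M) (hQM : ∀ t u, -Q t u ≤ M)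
    (hG0 : ∀ u ∈ Icc (0:ℝ) 1, ∀ v ∈ Icc (0:ℝ) 1, 0 ≤ G u v) (hGK : ∀ u v, G u v ≤ K)
    (hint : ∀ s u, IntervalIntegrable (fun v => G v u * Q s v) volume 0 1)
    (hIint : ∀ t u, IntervalIntegrable (fun s => ∫ v in (0:ℝ)..1, G v u * Q s v) volume t T)
    (hQeq : ∀ t ∈ Icc (0:ℝ) T, ∀ u ∈ Icc (0:ℝ) 1,
      Q t u = 1 + ∫ s in t..T, ∫ v in (0:ℝ)..1, G v u * Q s v) (n : ℕ) :
    ∀ t ∈ Icc (0:ℝ) T, ∀ u ∈ Icc (0:ℝ) 1, -Q t u ≤ M * (K * (T - t)) ^ n / n ! := by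
  have hK : 0 ≤ K := (hG0 0 ⟨le_rfl, zero_le_one⟩ 0 ⟨le_rfl, zero_le_one⟩).trans (hGK 0 0)
  induction n with
  | zero =>
    intro t _ u _
    simpa using hQM t u
  | succ n ih =>
    intro t ht u hu
    calc -Q t u ≤ K * ∫ s in t..T, M * (K * (T - s)) ^ n / n ! :=
          neg_le_mul_integral_of_neg_le ht.2 (fun v hv => hG0 v hv u hu) (fun v => hGK v u)
            (hint · u) (hIint t u) (hQeq t ht u hu)
            (fun s hs => by have := sub_nonneg.2 hs.2; positivity)
            ((by fun_prop : Continuous fun s => M * (K * (T - s)) ^ n / n !).intervalIntegrable _ _)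
            (fun s hs v hv => ih s ⟨ht.1.trans hs.1, hs.2⟩ v hv)
      _ = M * (K * (T - t)) ^ (n + 1) / (n + 1)! := by
          simp_rw [mul_div_assoc, intervalIntegral.integral_const_mul, mul_left_comm K M,
            mul_integral_pow_div_factorial]

lemma nonneg_of_volterra {M : ℝ} (hM : 0 ≤ M) (hQM : ∀ t u, -Q t u ≤ M)
    (hG0 : ∀ u ∈ Icc (0:ℝ) 1, ∀ v ∈ Icc (0:ℝ) 1, 0 ≤ G u v) (hGK : ∀ u v, G u v ≤ K)
    (hint : ∀ s u, IntervalIntegrable (fun v => G v u * Q s v) volume 0 1)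
    (hIint : ∀ t u, IntervalIntegrable (fun s => ∫ v in (0:ℝ)..1, G v u * Q s v) volume t T)
    (hQeq : ∀ t ∈ Icc (0:ℝ) T, ∀ u ∈ Icc (0:ℝ) 1,
      Q t u = 1 + ∫ s in t..T, ∫ v in (0:ℝ)..1, G v u * Q s v) :
    ∀ t ∈ Icc (0:ℝ) T, ∀ u ∈ Icc (0:ℝ) 1, 0 ≤ Q t u := by
  intro t ht u hu
  have hlim : Tendsto (fun n : ℕ => M * (K * (T - t)) ^ n / n !) atTop (nhds 0) := by
    simpa [mul_div_assoc] using
      (FloorSemiring.tendsto_pow_div_factorial_atTop (K * (T - t))).const_mul M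
  have := ge_of_tendsto' hlim fun n =>
    neg_le_pow_div_factorial_of_volterra hM hQM hG0 hGK hint hIint hQeq n t ht u hu
  linarith

end Volterra

theorem stmt_1_general (T : ℝ) (G Q : ℝ → ℝ → ℝ)
    (hGm : Measurable (Function.uncurry G))
    (hGb : ∃ M, ∀ u v, |G u v| ≤ M)
    (hGpos : ∀ u ∈ Icc (0:ℝ) 1, ∀ v ∈ Icc (0:ℝ) 1, 0 ≤ G u v)
    (hQm : ∀ t, Measurable (Q t))
    (hQb : ∃ M, ∀ t u, |Q t u| ≤ M)
    (hQc : ∀ u, Continuous fun t => Q t u)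
    (hQeq : ∀ t ∈ Icc (0:ℝ) T, ∀ u ∈ Icc (0:ℝ) 1,
      Q t u = 1 + ∫ s in t..T, ∫ v in (0:ℝ)..(1:ℝ), G v u * Q s v)
    (u₁ u₂ : ℝ) (hu₁ : u₁ ∈ Icc (0:ℝ) 1) (hu₂ : u₂ ∈ Icc (0:ℝ) 1)
    (hinfl : ∀ v ∈ Icc (0:ℝ) 1, G v u₁ ≤ G v u₂) :
    ∀ t ∈ Icc (0:ℝ) T, Q t u₁ ≤ Q t u₂ := by
  obtain ⟨MG, hMG⟩ := hGb
  obtain ⟨MQ, hMQ⟩ := hQb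
  have hGu : ∀ u, Measurable fun v => G v u := fun u =>
    hGm.comp (measurable_id.prodMk measurable_const)
  have hint : ∀ s u, IntervalIntegrable (fun v => G v u * Q s v) volume 0 1 := fun s u =>
    intervalIntegrable_mul_of_abs_le (hGu u) (hQm s) (hMG · u) (hMQ s)
  have hIint : ∀ t u, IntervalIntegrable (fun s => ∫ v in (0:ℝ)..1, G v u * Q s v) volume t T :=
    fun t u => (continuous_intervalIntegral_mul_of_abs_le (hGu u) (hMG · u) hQm hMQ
      hQc).intervalIntegrable t T
  have hQ0 := nonneg_of_volterra ((abs_nonneg _).trans (hMQ 0 0))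
    (fun t u => (neg_le_abs _).trans (hMQ t u)) hGpos (fun u v => (le_abs_self _).trans (hMG u v))
    hint hIint hQeq
  intro t ht
  rw [hQeq t ht u₁ hu₁, hQeq t ht u₂ hu₂, add_le_add_iff_left]
  refine integral_mono_on ht.2 (hIint t u₁) (hIint t u₂) fun s hs => ?_
  refine integral_mono_on zero_le_one (hint s u₁) (hint s u₂) fun v hv => ?_
  exact mul_le_mul_of_nonneg_right (hinfl v hv) (hQ0 s ⟨ht.1.trans hs.1, hs.2⟩ v hv)

theorem stmt_1 (T : ℝ) (hT : 0 < T) (G Q : ℝ → ℝ → ℝ)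
    (hGm : Measurable (Function.uncurry G))
    (hGb : ∃ M, ∀ u v, |G u v| ≤ M)
    (hGpos : ∀ u ∈ Icc (0:ℝ) 1, ∀ v ∈ Icc (0:ℝ) 1, 0 ≤ G u v)
    (hQm : ∀ t, Measurable (Q t))
    (hQb : ∃ M, ∀ t u, |Q t u| ≤ M)
    (hQc : ∀ u, Continuous fun t => Q t u)
    (hQeq : ∀ t ∈ Icc (0:ℝ) T, ∀ u ∈ Icc (0:ℝ) 1,
      Q t u = 1 + ∫ s in t..T, ∫ v in (0:ℝ)..(1:ℝ), G v u * Q s v)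
    (u₁ u₂ : ℝ) (hu₁ : u₁ ∈ Icc (0:ℝ) 1) (hu₂ : u₂ ∈ Icc (0:ℝ) 1)
    (hinfl : ∀ v ∈ Icc (0:ℝ) 1, G v u₁ ≤ G v u₂) :
    ∀ t ∈ Icc (0:ℝ) T, Q t u₁ ≤ Q t u₂ :=
  stmt_1_general T G Q hGm hGb hGpos hQm hQb hQc hQeq u₁ u₂ hu₁ hu₂ hinfl
end

section
/- Let ν₁ = N(m₁, σ₁²) and ν₂ = N(m₂, σ₂²) be one-dimensional Gaussian measures. Then the squared Wasserstein-2 distance between ν₁ and ν₂ equals (m₁ − m₂)² + (σ₁ − σ₂)². -/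
/-!
For any coupling `(X, Y)` of two laws with finite second moments,
`E(X - Y)² = (EX - EY)² + Var X + Var Y - 2 Cov(X, Y)`, and Cauchy–Schwarz `Cov(X, Y) ≤ σ_X σ_Y`
bounds this below by `(m₁ - m₂)² + (σ₁ - σ₂)²` (Gelbrich's bound). For Gaussians the bound is
attained by the comonotone coupling `(σ₁ Z + m₁, σ₂ Z + m₂)` with `Z ∼ N(0, 1)`, under which
`X - Y ∼ N(m₁ - m₂, (σ₁ - σ₂)²)`.
-/

open MeasureTheory Set

/-- The Wasserstein-2 distance between two probability measures on ℝ: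
the infimum over couplings `κ` of `(∫ |x-y|² dκ)^{1/2}`. -/
noncomputable def W2 (μ ν : Measure ℝ) : ℝ :=
  sInf {c : ℝ | ∃ κ : Measure (ℝ × ℝ), IsProbabilityMeasure κ ∧
    κ.map Prod.fst = μ ∧ κ.map Prod.snd = ν ∧
    c = ((∫⁻ p, ENNReal.ofReal (|p.1 - p.2| ^ 2) ∂κ) ^ (1/2 : ℝ)).toReal}

open ProbabilityTheory
open scoped NNReal ENNReal

namespace ProbabilityTheory

section Moments

variable {Ω : Type*} {mΩ : MeasurableSpace Ω} {μ : Measure Ω} {X Y : Ω → ℝ}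

lemma sq_covariance_le_variance_mul [IsFiniteMeasure μ] (hX : MemLp X 2 μ) (hY : MemLp Y 2 μ) :
    cov[X, Y; μ] ^ 2 ≤ Var[X; μ] * Var[Y; μ] := by
  have hdiscrim : discrim Var[X; μ] (2 * cov[X, Y; μ]) Var[Y; μ] ≤ 0 := by
    refine discrim_le_zero fun t ↦ ?_
    have h := variance_add (hX.const_smul t) hY
    rw [variance_smul, covariance_smul_left] at h
    nlinarith [variance_nonneg (t • X + Y) μ]
  rw [discrim] at hdiscrim
  nlinarith

lemma covariance_le_sqrt_variance_mul [IsFiniteMeasure μ] (hX : MemLp X 2 μ)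
    (hY : MemLp Y 2 μ) : cov[X, Y; μ] ≤ √Var[X; μ] * √Var[Y; μ] := by
  rw [← Real.sqrt_mul (variance_nonneg X μ)]
  exact (le_abs_self _).trans (Real.abs_le_sqrt (sq_covariance_le_variance_mul hX hY))

lemma sq_sub_sqrt_variance_le_variance_sub [IsFiniteMeasure μ] (hX : MemLp X 2 μ)
    (hY : MemLp Y 2 μ) : (√Var[X; μ] - √Var[Y; μ]) ^ 2 ≤ Var[X - Y; μ] := by
  rw [variance_sub hX hY]
  nlinarith [covariance_le_sqrt_variance_mul hX hY, Real.sq_sqrt (variance_nonneg X μ),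
    Real.sq_sqrt (variance_nonneg Y μ)]

lemma sq_sub_integral_add_sq_sub_sqrt_variance_le [IsProbabilityMeasure μ] (hX : MemLp X 2 μ)
    (hY : MemLp Y 2 μ) :
    (μ[X] - μ[Y]) ^ 2 + (√Var[X; μ] - √Var[Y; μ]) ^ 2 ≤ μ[(X - Y) ^ 2] := by
  have hmean : μ[X - Y] = μ[X] - μ[Y] :=
    integral_sub (hX.integrable one_le_two) (hY.integrable one_le_two)
  have h := variance_eq_sub (hX.sub hY)
  rw [hmean] at h
  linarith [sq_sub_sqrt_variance_le_variance_sub hX hY]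

end Moments

lemma gaussianReal_map_affine (m : ℝ) (v : ℝ≥0) (a b : ℝ) :
    (gaussianReal m v).map (fun x ↦ a * x + b)
      = gaussianReal (a * m + b) (.mk (a ^ 2) (sq_nonneg a) * v) := by
  rw [show (fun x ↦ a * x + b) = (· + b) ∘ (a * ·) from rfl,
    ← Measure.map_map (measurable_add_const b) (measurable_const_mul a),
    gaussianReal_map_const_mul, gaussianReal_map_add_const]

lemma integral_sq_gaussianReal (m : ℝ) (v : ℝ≥0) :
    ∫ x, x ^ 2 ∂gaussianReal m v = m ^ 2 + v := by
  have h := variance_eq_sub (memLp_id_gaussianReal (μ := m) (v := v) 2)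
  simp only [variance_id_gaussianReal, Pi.pow_apply, id_eq, integral_id_gaussianReal] at h
  linarith

end ProbabilityTheory

structure IsCoupling (κ : Measure (ℝ × ℝ)) (μ ν : Measure ℝ) : Prop where
  isProbabilityMeasure : IsProbabilityMeasure κ
  map_fst : κ.map Prod.fst = μ
  map_snd : κ.map Prod.snd = ν

namespace IsCoupling

variable {κ : Measure (ℝ × ℝ)} {μ ν : Measure ℝ}

lemma hasLaw_fst (h : IsCoupling κ μ ν) : HasLaw Prod.fst μ κ :=
  ⟨measurable_fst.aemeasurable, h.map_fst⟩

lemma hasLaw_snd (h : IsCoupling κ μ ν) : HasLaw Prod.snd ν κ :=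
  ⟨measurable_snd.aemeasurable, h.map_snd⟩

lemma memLp_fst (h : IsCoupling κ μ ν) (hμ : MemLp id 2 μ) : MemLp Prod.fst 2 κ :=
  (h.map_fst ▸ hμ).comp_of_map measurable_fst.aemeasurable

lemma memLp_snd (h : IsCoupling κ μ ν) (hν : MemLp id 2 ν) : MemLp Prod.snd 2 κ :=
  (h.map_snd ▸ hν).comp_of_map measurable_snd.aemeasurable

lemma integrable_sq_sub (h : IsCoupling κ μ ν) (hμ : MemLp id 2 μ) (hν : MemLp id 2 ν) :
    Integrable (fun p : ℝ × ℝ ↦ (p.1 - p.2) ^ 2) κ :=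
  ((h.memLp_fst hμ).sub (h.memLp_snd hν)).integrable_sq

lemma sq_sub_integral_add_sq_sub_sqrt_variance_le (h : IsCoupling κ μ ν) (hμ : MemLp id 2 μ)
    (hν : MemLp id 2 ν) :
    ((∫ x, x ∂μ) - ∫ x, x ∂ν) ^ 2 + (√Var[id; μ] - √Var[id; ν]) ^ 2
      ≤ ∫ p, (p.1 - p.2) ^ 2 ∂κ := by
  have := h.isProbabilityMeasure
  rw [← h.hasLaw_fst.integral_eq, ← h.hasLaw_snd.integral_eq, ← h.hasLaw_fst.variance_eq,
    ← h.hasLaw_snd.variance_eq]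
  exact ProbabilityTheory.sq_sub_integral_add_sq_sub_sqrt_variance_le
    (h.memLp_fst hμ) (h.memLp_snd hν)

end IsCoupling

lemma toReal_rpow_lintegral_sq_abs_sub {κ : Measure (ℝ × ℝ)}
    (hκ : Integrable (fun p : ℝ × ℝ ↦ (p.1 - p.2) ^ 2) κ) :
    ((∫⁻ p, ENNReal.ofReal (|p.1 - p.2| ^ 2) ∂κ) ^ (1 / 2 : ℝ)).toReal
      = √(∫ p, (p.1 - p.2) ^ 2 ∂κ) := by
  simp_rw [sq_abs]
  rw [← ofReal_integral_eq_lintegral_ofReal hκ (ae_of_all _ fun p ↦ sq_nonneg _),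
    ← ENNReal.toReal_rpow, ENNReal.toReal_ofReal (integral_nonneg fun p ↦ sq_nonneg _),
    Real.sqrt_eq_rpow]

-- The `toReal` in `W2` sends couplings of infinite cost to `0`; finite second moments exclude them.
lemma W2_eq_sqrt_of_optimal_coupling {μ ν : Measure ℝ} {κ₀ : Measure (ℝ × ℝ)} {C : ℝ}
    (hμ : MemLp id 2 μ) (hν : MemLp id 2 ν) (h₀ : IsCoupling κ₀ μ ν)
    (hκ₀ : ∫ p, (p.1 - p.2) ^ 2 ∂κ₀ = C)
    (hle : ∀ κ, IsCoupling κ μ ν → C ≤ ∫ p, (p.1 - p.2) ^ 2 ∂κ) :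
    W2 μ ν = √C := by
  refine IsLeast.csInf_eq ⟨⟨κ₀, h₀.1, h₀.2, h₀.3, ?_⟩, ?_⟩
  · rw [toReal_rpow_lintegral_sq_abs_sub (h₀.integrable_sq_sub hμ hν), hκ₀]
  · rintro _ ⟨κ, hκ, h₁, h₂, rfl⟩
    have hc : IsCoupling κ μ ν := ⟨hκ, h₁, h₂⟩
    rw [toReal_rpow_lintegral_sq_abs_sub (hc.integrable_sq_sub hμ hν)]
    exact Real.sqrt_le_sqrt (hle κ hc)

noncomputable def gaussianCoupling (m₁ m₂ : ℝ) (σ₁ σ₂ : ℝ≥0) : Measure (ℝ × ℝ) :=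
  (gaussianReal 0 1).map fun x ↦ (σ₁ * x + m₁, σ₂ * x + m₂)

lemma gaussianReal_zero_one_map_mul_add (m : ℝ) (σ : ℝ≥0) :
    (gaussianReal 0 1).map (fun x ↦ σ * x + m) = gaussianReal m (σ ^ 2) := by
  rw [gaussianReal_map_affine]
  congr 1
  · ring
  · ext; simp

lemma isCoupling_gaussianCoupling (m₁ m₂ : ℝ) (σ₁ σ₂ : ℝ≥0) :
    IsCoupling (gaussianCoupling m₁ m₂ σ₁ σ₂) (gaussianReal m₁ (σ₁ ^ 2))
      (gaussianReal m₂ (σ₂ ^ 2)) where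
  isProbabilityMeasure := Measure.isProbabilityMeasure_map (by fun_prop)
  map_fst := by
    rw [gaussianCoupling, Measure.map_map measurable_fst (by fun_prop)]
    exact gaussianReal_zero_one_map_mul_add m₁ σ₁
  map_snd := by
    rw [gaussianCoupling, Measure.map_map measurable_snd (by fun_prop)]
    exact gaussianReal_zero_one_map_mul_add m₂ σ₂

lemma integral_sq_sub_gaussianCoupling (m₁ m₂ : ℝ) (σ₁ σ₂ : ℝ≥0) :
    ∫ p, (p.1 - p.2) ^ 2 ∂gaussianCoupling m₁ m₂ σ₁ σ₂
      = (m₁ - m₂) ^ 2 + ((σ₁ : ℝ) - σ₂) ^ 2 := by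
  have hdiff : (gaussianReal 0 1).map (fun x ↦ ((σ₁ : ℝ) - σ₂) * x + (m₁ - m₂))
      = gaussianReal (m₁ - m₂) (.mk (((σ₁ : ℝ) - σ₂) ^ 2) (sq_nonneg _)) := by
    rw [gaussianReal_map_affine]
    congr 1
    · ring
    · ext; simp
  rw [gaussianCoupling, integral_map (by fun_prop) (by fun_prop)]
  calc ∫ x, (σ₁ * x + m₁ - (σ₂ * x + m₂)) ^ 2 ∂gaussianReal 0 1
      = ∫ x, (((σ₁ : ℝ) - σ₂) * x + (m₁ - m₂)) ^ 2 ∂gaussianReal 0 1 := by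
        congr with x; ring
    _ = ∫ y, y ^ 2 ∂(gaussianReal 0 1).map (fun x ↦ ((σ₁ : ℝ) - σ₂) * x + (m₁ - m₂)) := by
        rw [integral_map (by fun_prop) (by fun_prop)]
    _ = _ := by rw [hdiff, integral_sq_gaussianReal]; rfl

theorem stmt_6 (m₁ m₂ : ℝ) (σ₁ σ₂ : NNReal) :
    (W2 (ProbabilityTheory.gaussianReal m₁ (σ₁ ^ 2)) (ProbabilityTheory.gaussianReal m₂ (σ₂ ^ 2))) ^ 2
      = (m₁ - m₂) ^ 2 + ((σ₁ : ℝ) - (σ₂ : ℝ)) ^ 2 := by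
  have hμ : MemLp id 2 (gaussianReal m₁ (σ₁ ^ 2)) := memLp_id_gaussianReal 2
  have hν : MemLp id 2 (gaussianReal m₂ (σ₂ ^ 2)) := memLp_id_gaussianReal 2
  rw [W2_eq_sqrt_of_optimal_coupling hμ hν (isCoupling_gaussianCoupling m₁ m₂ σ₁ σ₂)
    (integral_sq_sub_gaussianCoupling m₁ m₂ σ₁ σ₂) fun κ hκ ↦ ?_, Real.sq_sqrt (by positivity)]
  simpa [integral_id_gaussianReal, variance_id_gaussianReal] using
    hκ.sq_sub_integral_add_sq_sub_sqrt_variance_le hμ hν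
end

section
/- Let G:[0,1]²→ℝ be bounded, measurable, nonnegative, with g_min := inf_{u,v} G(u,v) and g_max := sup_{u,v} G(u,v). Let Q solve Q(t,u) = 1 + ∫_t^T ∫_0^1 G(v,u) Q(s,v) dv ds. Then e^{g_min (T−t)} ≤ Q(t,u) ≤ e^{g_max (T−t)} for all (t,u) ∈ [0,T]×[0,1]. -/
/-
Comparison with the constant kernels. `P t = exp (g * (T - t))` solves `P = 1 + ∫ₜᵀ g P`, so
`D = Q - P` satisfies `D t u = ∫ₜᵀ ∫₀¹ G(v,u) D(s,v) dv ds + (∫₀¹ G(v,u) dv - g) ∫ₜᵀ P`. For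
`g = gmax` the last term is `≤ 0`, for `g = gmin` it is `≥ 0`. A Volterra inequality
`D ≤ ∫ₜᵀ ∫₀¹ G D` with `0 ≤ G ≤ K` forces `D ≤ 0`: iterating it from `D ≤ M` gives
`D t u ≤ M (K (T - t))ⁿ / n!` for every `n`.
-/

open MeasureTheory intervalIntegral Set

open Nat in
theorem integral_mul_pow_div_factorial (K M t T : ℝ) (n : ℕ) :
    ∫ s in t..T, K * (M * (K * (T - s)) ^ n / n !) = M * (K * (T - t)) ^ (n + 1) / (n + 1)! := by
  have h : ∀ s, K * (M * (K * (T - s)) ^ n / n !) = M * K ^ (n + 1) / n ! * (T - s) ^ n := by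
    intro s; rw [mul_pow]; ring
  rw [mul_pow]
  simp_rw [h, intervalIntegral.integral_const_mul, integral_comp_sub_left (fun x => x ^ n),
    integral_pow, Nat.factorial_succ]
  push_cast
  field_simp
  ring

theorem integral_mul_exp_mul_sub (g t T : ℝ) :
    ∫ s in t..T, g * Real.exp (g * (T - s)) = Real.exp (g * (T - t)) - 1 := by
  have hderiv : ∀ s ∈ uIcc t T,
      HasDerivAt (fun s => -Real.exp (g * (T - s))) (g * Real.exp (g * (T - s))) s := by
    intro s _
    refine (((hasDerivAt_id s).const_sub T).const_mul g).exp.neg.congr_deriv ?_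
    simp only [id]
    ring
  rw [integral_eq_sub_of_hasDerivAt hderiv ((by fun_prop : Continuous _).intervalIntegrable t T)]
  simp only [sub_self, mul_zero, Real.exp_zero]
  ring

theorem integral_unitInterval_mem_Icc {h : ℝ → ℝ} {m M : ℝ}
    (hh : IntervalIntegrable h volume 0 1) (hb : ∀ v ∈ Icc (0 : ℝ) 1, m ≤ h v ∧ h v ≤ M) :
    ∫ v in (0 : ℝ)..1, h v ∈ Icc m M := by
  constructor
  · simpa using integral_mono_on zero_le_one intervalIntegrable_const hh fun v hv => (hb v hv).1
  · simpa using integral_mono_on zero_le_one hh intervalIntegrable_const fun v hv => (hb v hv).2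

theorem intervalIntegrable_of_abs_le {h : ℝ → ℝ} {a b C : ℝ} (hm : Measurable h)
    (hC : ∀ v ∈ uIcc a b, |h v| ≤ C) : IntervalIntegrable h volume a b :=
  intervalIntegrable_const.mono_fun' hm.aestronglyMeasurable <|
    (ae_restrict_iff' measurableSet_uIoc).2 <| .of_forall fun v hv =>
      hC v (uIoc_subset_uIcc hv)

theorem IntervalIntegrable.mul_of_abs_le {g f : ℝ → ℝ} {a b M : ℝ}
    (hg : IntervalIntegrable g volume a b) (hf : Measurable f) (hM : ∀ v, |f v| ≤ M) :
    IntervalIntegrable (fun v => g v * f v) volume a b :=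
  intervalIntegrable_iff.2 <|
    (intervalIntegrable_iff.1 hg).mul_bdd hf.aestronglyMeasurable (.of_forall hM)

theorem integral_mul_le_mul_of_le {g f : ℝ → ℝ} {K c : ℝ}
    (hgf : IntervalIntegrable (fun v => g v * f v) volume 0 1)
    (hg : IntervalIntegrable g volume 0 1) (hgK : ∀ v ∈ Icc (0 : ℝ) 1, 0 ≤ g v ∧ g v ≤ K)
    (hfc : ∀ v ∈ Icc (0 : ℝ) 1, f v ≤ c) (hc : 0 ≤ c) :
    ∫ v in (0 : ℝ)..1, g v * f v ≤ K * c :=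
  calc ∫ v in (0 : ℝ)..1, g v * f v ≤ ∫ v in (0 : ℝ)..1, g v * c :=
        integral_mono_on zero_le_one hgf (hg.mul_const c) fun v hv =>
          mul_le_mul_of_nonneg_left (hfc v hv) (hgK v hv).1
    _ = (∫ v in (0 : ℝ)..1, g v) * c := intervalIntegral.integral_mul_const c g
    _ ≤ K * c := mul_le_mul_of_nonneg_right (integral_unitInterval_mem_Icc hg hgK).2 hc

/- The bound is only required on `S`: the comparison functions `Q t v - exp (g * (T - t))` are
unbounded as `t → -∞`. -/
def IsBoundedCaratheodoryOn (S : Set ℝ) (f : ℝ → ℝ → ℝ) : Prop :=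
  (∀ t, Measurable (f t)) ∧ (∃ M, ∀ t ∈ S, ∀ v, |f t v| ≤ M) ∧ ∀ v, Continuous fun t => f t v

namespace IsBoundedCaratheodoryOn

variable {S : Set ℝ} {f : ℝ → ℝ → ℝ}

theorem mono (hf : IsBoundedCaratheodoryOn S f) {S' : Set ℝ} (h : S' ⊆ S) :
    IsBoundedCaratheodoryOn S' f :=
  ⟨hf.1, hf.2.1.imp fun _ hM t ht => hM t (h ht), hf.2.2⟩

theorem neg (hf : IsBoundedCaratheodoryOn S f) : IsBoundedCaratheodoryOn S fun t v => -f t v :=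
  ⟨fun t => (hf.1 t).neg, hf.2.1.imp fun _ hM t ht v => (abs_neg (f t v)).le.trans (hM t ht v),
    fun v => (hf.2.2 v).neg⟩

theorem sub_of_continuous (hf : IsBoundedCaratheodoryOn S f) (hS : IsCompact S) {P : ℝ → ℝ}
    (hP : Continuous P) : IsBoundedCaratheodoryOn S fun t v => f t v - P t := by
  obtain ⟨hm, ⟨M, hM⟩, hc⟩ := hf
  obtain ⟨C, hC⟩ := hS.exists_bound_of_continuousOn hP.continuousOn
  refine ⟨fun t => (hm t).sub_const _, ⟨M + C, fun t ht v => ?_⟩, fun v => (hc v).sub hP⟩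
  exact (abs_sub _ _).trans (add_le_add (hM t ht v) (hC t ht))

theorem continuousOn_integral_mul (hf : IsBoundedCaratheodoryOn S f) {g : ℝ → ℝ} {a b : ℝ}
    (hg : IntervalIntegrable g volume a b) :
    ContinuousOn (fun s => ∫ v in a..b, g v * f s v) S := by
  obtain ⟨hm, ⟨M, hM⟩, hc⟩ := hf
  intro s _
  refine continuousWithinAt_of_dominated_interval (bound := fun v => ‖g v‖ * M)
    (.of_forall fun x => (intervalIntegrable_iff.1 hg).aestronglyMeasurable.mul
      (hm x).aestronglyMeasurable)
    (eventually_nhdsWithin_of_forall fun x hx => .of_forall fun v _ => ?_)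
    (hg.norm.mul_const M) (.of_forall fun v _ => (continuous_const.mul (hc v)).continuousWithinAt)
  rw [norm_mul, Real.norm_eq_abs (f x v)]
  exact mul_le_mul_of_nonneg_left (hM x hx v) (norm_nonneg _)

end IsBoundedCaratheodoryOn

section Volterra

open Nat Filter Topology

variable {G D : ℝ → ℝ → ℝ} {T K : ℝ}

theorem nonpos_of_le_volterra
    (hGi : ∀ u ∈ Icc (0 : ℝ) 1, IntervalIntegrable (fun v => G v u) volume 0 1)
    (hG : ∀ u ∈ Icc (0 : ℝ) 1, ∀ v ∈ Icc (0 : ℝ) 1, 0 ≤ G v u ∧ G v u ≤ K)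
    (hD : IsBoundedCaratheodoryOn (Icc 0 T) D)
    (hDle : ∀ t ∈ Icc 0 T, ∀ u ∈ Icc (0 : ℝ) 1,
      D t u ≤ ∫ s in t..T, ∫ v in (0 : ℝ)..1, G v u * D s v) :
    ∀ t ∈ Icc 0 T, ∀ u ∈ Icc (0 : ℝ) 1, D t u ≤ 0 := by
  obtain ⟨M, hM⟩ := hD.2.1
  have h01 : (0 : ℝ) ∈ Icc (0 : ℝ) 1 := ⟨le_rfl, zero_le_one⟩
  have hK : 0 ≤ K := (hG 0 h01 0 h01).1.trans (hG 0 h01 0 h01).2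
  have hbound : ∀ n : ℕ, ∀ t ∈ Icc 0 T, ∀ u ∈ Icc (0 : ℝ) 1,
      D t u ≤ M * (K * (T - t)) ^ n / n ! := by
    intro n
    induction n with
    | zero => intro t ht u hu; simpa using (le_abs_self _).trans (hM t ht u)
    | succ n ih =>
      intro t ht u hu
      have hM0 : 0 ≤ M := (abs_nonneg _).trans (hM t ht u)
      have hsub : uIcc t T ⊆ Icc 0 T := uIcc_of_le ht.2 ▸ Icc_subset_Icc ht.1 le_rfl
      calc D t u ≤ ∫ s in t..T, ∫ v in (0 : ℝ)..1, G v u * D s v := hDle t ht u hu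
        _ ≤ ∫ s in t..T, K * (M * (K * (T - s)) ^ n / n !) := by
          refine integral_mono_on ht.2
            (((hD.continuousOn_integral_mul (hGi u hu)).mono hsub).intervalIntegrable)
            ((by fun_prop : Continuous _).intervalIntegrable t T) fun s hs => ?_
          have hs' : s ∈ Icc 0 T := ⟨ht.1.trans hs.1, hs.2⟩
          have hKs : 0 ≤ K * (T - s) := mul_nonneg hK (sub_nonneg.2 hs.2)
          exact integral_mul_le_mul_of_le ((hGi u hu).mul_of_abs_le (hD.1 s) (hM s hs'))
            (hGi u hu) (hG u hu) (fun v hv => ih s hs' v hv) (by positivity)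
        _ = M * (K * (T - t)) ^ (n + 1) / (n + 1)! := integral_mul_pow_div_factorial K M t T n
  intro t ht u hu
  have hlim : Tendsto (fun n : ℕ => M * (K * (T - t)) ^ n / n !) atTop (𝓝 0) := by
    simpa [mul_div_assoc] using
      (FloorSemiring.tendsto_pow_div_factorial_atTop (K * (T - t))).const_mul M
  exact ge_of_tendsto hlim (.of_forall fun n => hbound n t ht u hu)

theorem nonneg_of_volterra_le
    (hGi : ∀ u ∈ Icc (0 : ℝ) 1, IntervalIntegrable (fun v => G v u) volume 0 1)
    (hG : ∀ u ∈ Icc (0 : ℝ) 1, ∀ v ∈ Icc (0 : ℝ) 1, 0 ≤ G v u ∧ G v u ≤ K)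
    (hD : IsBoundedCaratheodoryOn (Icc 0 T) D)
    (hDge : ∀ t ∈ Icc 0 T, ∀ u ∈ Icc (0 : ℝ) 1,
      ∫ s in t..T, ∫ v in (0 : ℝ)..1, G v u * D s v ≤ D t u) :
    ∀ t ∈ Icc 0 T, ∀ u ∈ Icc (0 : ℝ) 1, 0 ≤ D t u := by
  intro t ht u hu
  have h := nonpos_of_le_volterra hGi hG hD.neg (fun t ht u hu => ?_) t ht u hu
  · linarith
  · simp only [mul_neg, intervalIntegral.integral_neg]
    linarith [hDge t ht u hu]

end Volterra

theorem sub_exp_eq_integral {G Q : ℝ → ℝ → ℝ} {T : ℝ} (g : ℝ)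
    (hGi : ∀ u ∈ Icc (0 : ℝ) 1, IntervalIntegrable (fun v => G v u) volume 0 1)
    (hQ : IsBoundedCaratheodoryOn univ Q)
    (hQeq : ∀ t ∈ Icc (0 : ℝ) T, ∀ u ∈ Icc (0 : ℝ) 1,
      Q t u = 1 + ∫ s in t..T, ∫ v in (0 : ℝ)..(1 : ℝ), G v u * Q s v)
    {t u : ℝ} (ht : t ∈ Icc 0 T) (hu : u ∈ Icc (0 : ℝ) 1) :
    Q t u - Real.exp (g * (T - t)) =
      (∫ s in t..T, ∫ v in (0 : ℝ)..1, G v u * (Q s v - Real.exp (g * (T - s)))) +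
        ((∫ v in (0 : ℝ)..1, G v u) - g) * ∫ s in t..T, Real.exp (g * (T - s)) := by
  obtain ⟨M, hM⟩ := hQ.2.1
  have hsplit : ∀ s, ∫ v in (0 : ℝ)..1, G v u * (Q s v - Real.exp (g * (T - s))) =
      (∫ v in (0 : ℝ)..1, G v u * Q s v) -
        (∫ v in (0 : ℝ)..1, G v u) * Real.exp (g * (T - s)) := by
    intro s
    simp_rw [mul_sub]
    rw [integral_sub ((hGi u hu).mul_of_abs_le (hQ.1 s) (hM s (mem_univ s)))
      ((hGi u hu).mul_const _), intervalIntegral.integral_mul_const]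
  have hF : IntervalIntegrable (fun s => ∫ v in (0 : ℝ)..1, G v u * Q s v) volume t T :=
    (continuousOn_univ.1 (hQ.continuousOn_integral_mul (hGi u hu))).intervalIntegrable t T
  have hexp := integral_mul_exp_mul_sub g t T
  rw [intervalIntegral.integral_const_mul] at hexp
  simp_rw [hsplit]
  rw [integral_sub hF (((by fun_prop : Continuous _).intervalIntegrable t T).const_mul _),
    intervalIntegral.integral_const_mul, hQeq t ht u hu]
  linear_combination hexp

theorem stmt_18_general (T gmin gmax : ℝ) (hgmin : 0 ≤ gmin)
    (G Q : ℝ → ℝ → ℝ)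
    (hGm : Measurable (Function.uncurry G))
    (hGbounds : ∀ u ∈ Icc (0:ℝ) 1, ∀ v ∈ Icc (0:ℝ) 1, gmin ≤ G u v ∧ G u v ≤ gmax)
    (hQm : ∀ t, Measurable (Q t))
    (hQb : ∃ M, ∀ t u, |Q t u| ≤ M)
    (hQc : ∀ u, Continuous fun t => Q t u)
    (hQeq : ∀ t ∈ Icc (0:ℝ) T, ∀ u ∈ Icc (0:ℝ) 1,
      Q t u = 1 + ∫ s in t..T, ∫ v in (0:ℝ)..(1:ℝ), G v u * Q s v) :
    ∀ t ∈ Icc (0:ℝ) T, ∀ u ∈ Icc (0:ℝ) 1,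
      Real.exp (gmin * (T - t)) ≤ Q t u ∧ Q t u ≤ Real.exp (gmax * (T - t)) := by
  have hG : ∀ u ∈ Icc (0 : ℝ) 1, ∀ v ∈ Icc (0 : ℝ) 1, 0 ≤ G v u ∧ G v u ≤ gmax :=
    fun u hu v hv => ⟨hgmin.trans (hGbounds v hv u hu).1, (hGbounds v hv u hu).2⟩
  have hGi : ∀ u ∈ Icc (0 : ℝ) 1, IntervalIntegrable (fun v => G v u) volume 0 1 :=
    fun u hu => intervalIntegrable_of_abs_le (hGm.comp (measurable_id.prodMk measurable_const))
      fun v hv => by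
        rw [uIcc_of_le zero_le_one] at hv
        exact (abs_of_nonneg (hG u hu v hv).1).trans_le (hG u hu v hv).2
  have hmean : ∀ u ∈ Icc (0 : ℝ) 1, ∫ v in (0 : ℝ)..1, G v u ∈ Icc gmin gmax :=
    fun u hu => integral_unitInterval_mem_Icc (hGi u hu) fun v hv => hGbounds v hv u hu
  have hQ : IsBoundedCaratheodoryOn univ Q := ⟨hQm, hQb.imp fun _ hM t _ => hM t, hQc⟩
  have hdiff (g : ℝ) :
      IsBoundedCaratheodoryOn (Icc 0 T) fun t v => Q t v - Real.exp (g * (T - t)) :=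
    (hQ.mono (subset_univ _)).sub_of_continuous isCompact_Icc (by fun_prop)
  have hexp_integral (g : ℝ) {t : ℝ} (ht : t ∈ Icc 0 T) : 0 ≤ ∫ s in t..T, Real.exp (g * (T - s)) :=
    integral_nonneg ht.2 fun s _ => (Real.exp_pos _).le
  have hlower := nonneg_of_volterra_le hGi hG (hdiff gmin) fun t ht u hu => by
    rw [sub_exp_eq_integral gmin hGi hQ hQeq ht hu]
    exact le_add_of_nonneg_right (mul_nonneg (sub_nonneg.2 (hmean u hu).1) (hexp_integral gmin ht))
  have hupper := nonpos_of_le_volterra hGi hG (hdiff gmax) fun t ht u hu => by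
    rw [sub_exp_eq_integral gmax hGi hQ hQeq ht hu]
    exact add_le_of_nonpos_right
      (mul_nonpos_of_nonpos_of_nonneg (sub_nonpos.2 (hmean u hu).2) (hexp_integral gmax ht))
  exact fun t ht u hu => ⟨sub_nonneg.1 (hlower t ht u hu), sub_nonpos.1 (hupper t ht u hu)⟩

theorem stmt_18 (T gmin gmax : ℝ) (hT : 0 < T) (hgmin : 0 ≤ gmin)
    (G Q : ℝ → ℝ → ℝ)
    (hGm : Measurable (Function.uncurry G))
    (hGbounds : ∀ u ∈ Icc (0:ℝ) 1, ∀ v ∈ Icc (0:ℝ) 1, gmin ≤ G u v ∧ G u v ≤ gmax)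
    (hQm : ∀ t, Measurable (Q t))
    (hQb : ∃ M, ∀ t u, |Q t u| ≤ M)
    (hQc : ∀ u, Continuous fun t => Q t u)
    (hQeq : ∀ t ∈ Icc (0:ℝ) T, ∀ u ∈ Icc (0:ℝ) 1,
      Q t u = 1 + ∫ s in t..T, ∫ v in (0:ℝ)..(1:ℝ), G v u * Q s v) :
    ∀ t ∈ Icc (0:ℝ) T, ∀ u ∈ Icc (0:ℝ) 1,
      Real.exp (gmin * (T - t)) ≤ Q t u ∧ Q t u ≤ Real.exp (gmax * (T - t)) :=
  stmt_18_general T gmin gmax hgmin G Q hGm hGbounds hQm hQb hQc hQeq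
end
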